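/- Let X ~ Binomial(d, p) with μ = d·p, and let Y ~ Poisson(μ). Then for every t ≥ 0, P[X ≥ μ + t] ≤ 2·P[Y ≥ μ + t]. -/

import Mathlib

/-!
Give the number of trials a `Poisson(d)` distribution: a `Binomial(N, p)` count with
`N ~ Poisson(d)` is `Poisson(dp)` (thinning). The binomial tail `P[Bin(n, p) ≥ m]` is
nondecreasing in `n`, so `P[Poisson(dp) ≥ m] ≥ P[N ≥ d] · P[Bin(d, p) ≥ m]`, and
`P[N ≥ d] ≥ 1/2` because `Poisson(d)` gives `d + j` at least the mass of `d - 1 - j`: their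
ratio is `d^(2j+1) / ((d - j) ⋯ (d + j)) ≥ 1`.
-/

open Finset Nat

noncomputable def binomialWeight (n : ℕ) (p : ℝ) (k : ℕ) : ℝ :=
  (n.choose k : ℝ) * p ^ k * (1 - p) ^ (n - k)

noncomputable def binomialTail (n : ℕ) (p : ℝ) (m : ℕ) : ℝ :=
  ∑ k ∈ range (n + 1), if m ≤ k then binomialWeight n p k else 0

noncomputable def poissonWeight (r : ℝ) (n : ℕ) : ℝ :=
  Real.exp (-r) * r ^ n / n !

section Binomial

variable {p : ℝ}

lemma binomialWeight_nonneg (hp0 : 0 ≤ p) (hp1 : p ≤ 1) (n k : ℕ) :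
    0 ≤ binomialWeight n p k := by
  unfold binomialWeight
  have : 0 ≤ 1 - p := by linarith
  positivity

lemma binomialWeight_of_lt {n k : ℕ} (h : n < k) : binomialWeight n p k = 0 := by
  simp [binomialWeight, Nat.choose_eq_zero_of_lt h]

lemma binomialWeight_succ_succ (n k : ℕ) :
    binomialWeight (n + 1) p (k + 1) =
      (1 - p) * binomialWeight n p (k + 1) + p * binomialWeight n p k := by
  unfold binomialWeight
  rw [Nat.choose_succ_succ', Nat.cast_add, Nat.add_sub_add_right]
  rcases lt_or_ge k n with hk | hk
  · rw [show n - k = n - (k + 1) + 1 by omega]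
    ring
  · rw [Nat.choose_eq_zero_of_lt (by omega : n < k + 1)]
    ring

lemma sum_binomialWeight (n : ℕ) : ∑ k ∈ range (n + 1), binomialWeight n p k = 1 := by
  have h := (add_pow p (1 - p) n).symm
  rw [add_sub_cancel, one_pow] at h
  rw [← h]
  exact sum_congr rfl fun k _ => by rw [binomialWeight]; ring

lemma binomialTail_eq_sum_range {n N : ℕ} (h : n < N) (m : ℕ) :
    binomialTail n p m = ∑ k ∈ range N, if m ≤ k then binomialWeight n p k else 0 := by
  refine sum_subset (range_subset_range.2 h) fun k _ hk => ?_
  simp [binomialWeight_of_lt (by simpa using hk : n < k)]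

lemma binomialTail_zero (n : ℕ) : binomialTail n p 0 = 1 := by
  simpa [binomialTail] using sum_binomialWeight n

lemma binomialTail_succ_succ (n m : ℕ) :
    binomialTail (n + 1) p (m + 1) =
      (1 - p) * binomialTail n p (m + 1) + p * binomialTail n p m := by
  have hL : binomialTail (n + 1) p (m + 1)
      = ∑ k ∈ range (n + 1), if m ≤ k then binomialWeight (n + 1) p (k + 1) else 0 := by
    simp [binomialTail, sum_range_succ' _ (n + 1)]
  have hR : binomialTail n p (m + 1)
      = ∑ k ∈ range (n + 1), if m ≤ k then binomialWeight n p (k + 1) else 0 := by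
    simp [binomialTail_eq_sum_range (by omega : n < n + 2), sum_range_succ' _ (n + 1)]
  rw [hL, hR, binomialTail, mul_sum, mul_sum, ← sum_add_distrib]
  refine sum_congr rfl fun k _ => ?_
  split_ifs
  · exact binomialWeight_succ_succ n k
  · ring

lemma binomialTail_antitone (hp0 : 0 ≤ p) (hp1 : p ≤ 1) (n : ℕ) {m m' : ℕ} (h : m ≤ m') :
    binomialTail n p m' ≤ binomialTail n p m := by
  refine sum_le_sum fun k _ => ?_
  split_ifs <;> first | exact le_rfl | exact binomialWeight_nonneg hp0 hp1 n k | omega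

lemma binomialTail_nonneg (hp0 : 0 ≤ p) (hp1 : p ≤ 1) (n m : ℕ) : 0 ≤ binomialTail n p m :=
  sum_nonneg fun k _ => by
    split_ifs <;> first | exact le_rfl | exact binomialWeight_nonneg hp0 hp1 n k

lemma binomialTail_le_one (hp0 : 0 ≤ p) (hp1 : p ≤ 1) (n m : ℕ) : binomialTail n p m ≤ 1 :=
  binomialTail_zero (p := p) n ▸ binomialTail_antitone hp0 hp1 n m.zero_le

lemma binomialTail_le_succ (hp0 : 0 ≤ p) (hp1 : p ≤ 1) (n m : ℕ) :
    binomialTail n p m ≤ binomialTail (n + 1) p m := by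
  cases m with
  | zero => rw [binomialTail_zero, binomialTail_zero]
  | succ m =>
    rw [binomialTail_succ_succ]
    nlinarith [binomialTail_antitone hp0 hp1 n m.le_succ]

lemma binomialTail_mono (hp0 : 0 ≤ p) (hp1 : p ≤ 1) (m : ℕ) :
    Monotone fun n => binomialTail n p m :=
  monotone_nat_of_le_succ fun n => binomialTail_le_succ hp0 hp1 n m

end Binomial

section Poisson

lemma poissonWeight_nonneg {r : ℝ} (hr : 0 ≤ r) (n : ℕ) : 0 ≤ poissonWeight r n := by
  unfold poissonWeight
  positivity

lemma hasSum_poissonWeight (r : ℝ) : HasSum (poissonWeight r) 1 := by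
  have h := (NormedSpace.expSeries_div_hasSum_exp r).mul_left (Real.exp (-r))
  rw [← Real.exp_eq_exp_ℝ, ← Real.exp_add, neg_add_cancel, Real.exp_zero] at h
  unfold poissonWeight
  simpa only [mul_div_assoc] using h

lemma Nat.factorial_add_le_pow_mul_factorial {d j : ℕ} (hj : j < d) :
    (d + j)! ≤ d ^ (2 * j + 1) * (d - 1 - j)! := by
  induction j with
  | zero =>
    obtain ⟨e, rfl⟩ : ∃ e, d = e + 1 := ⟨d - 1, by omega⟩
    simp [Nat.factorial_succ]
  | succ j ih =>
    have hpair : (d + (j + 1)) * (d - 1 - j) ≤ d * d := by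
      zify [show j ≤ d - 1 by omega, show 1 ≤ d by omega]
      nlinarith
    calc (d + (j + 1))! = (d + (j + 1)) * (d + j)! := Nat.factorial_succ _
      _ ≤ (d + (j + 1)) * (d ^ (2 * j + 1) * (d - 1 - j)!) :=
        Nat.mul_le_mul_left _ (ih (by omega))
      _ = d ^ (2 * j + 1) * ((d + (j + 1)) * (d - 1 - j)) * (d - 1 - (j + 1))! := by
        rw [show d - 1 - j = d - 1 - (j + 1) + 1 by omega, Nat.factorial_succ]
        ring
      _ ≤ d ^ (2 * j + 1) * (d * d) * (d - 1 - (j + 1))! := by gcongr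
      _ = d ^ (2 * (j + 1) + 1) * (d - 1 - (j + 1))! := by ring

lemma poissonWeight_sub_le_add {d j : ℕ} (hj : j < d) :
    poissonWeight d (d - 1 - j) ≤ poissonWeight d (d + j) := by
  unfold poissonWeight
  rw [mul_div_assoc, mul_div_assoc]
  refine mul_le_mul_of_nonneg_left ?_ (Real.exp_nonneg _)
  rw [div_le_div_iff₀ (by positivity) (by positivity)]
  calc (d : ℝ) ^ (d - 1 - j) * (d + j)!
      ≤ (d : ℝ) ^ (d - 1 - j) * (d ^ (2 * j + 1) * (d - 1 - j)!) := by
        gcongr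
        exact_mod_cast Nat.factorial_add_le_pow_mul_factorial hj
    _ = (d : ℝ) ^ (d + j) * (d - 1 - j)! := by
        rw [← mul_assoc, ← pow_add, show d - 1 - j + (2 * j + 1) = d + j by omega]

lemma one_le_two_mul_tsum_poissonWeight_add (d : ℕ) :
    1 ≤ 2 * ∑' j, poissonWeight d (j + d) := by
  have hs := (hasSum_poissonWeight d).summable
  have hsplit := hs.sum_add_tsum_nat_add d
  rw [(hasSum_poissonWeight d).tsum_eq] at hsplit
  have hbelow : ∑ n ∈ range d, poissonWeight d n ≤ ∑' j, poissonWeight d (j + d) :=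
    calc ∑ n ∈ range d, poissonWeight d n = ∑ j ∈ range d, poissonWeight d (d - 1 - j) :=
          (sum_range_reflect _ d).symm
      _ ≤ ∑ j ∈ range d, poissonWeight d (j + d) :=
          sum_le_sum fun j hj => add_comm d j ▸ poissonWeight_sub_le_add (mem_range.1 hj)
      _ ≤ ∑' j, poissonWeight d (j + d) :=
          Summable.sum_le_tsum _ (fun j _ => poissonWeight_nonneg d.cast_nonneg _)
            ((summable_nat_add_iff d).2 hs)
  linarith

lemma hasSum_poissonWeight_mul_binomialWeight (r p : ℝ) (k : ℕ) :
    HasSum (fun n => poissonWeight r n * binomialWeight n p k) (poissonWeight (r * p) k) := by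
  rw [← hasSum_nat_add_iff' k, sum_eq_zero fun n hn => by
    rw [binomialWeight_of_lt (mem_range.1 hn), mul_zero], sub_zero]
  have h := (NormedSpace.expSeries_div_hasSum_exp (r * (1 - p))).mul_left
    (Real.exp (-r) * (r * p) ^ k / k !)
  have hterm : (fun n => poissonWeight r (n + k) * binomialWeight (n + k) p k)
      = fun n => Real.exp (-r) * (r * p) ^ k / k ! * ((r * (1 - p)) ^ n / n !) := by
    funext n
    have hchoose := Nat.add_choose_mul_factorial_mul_factorial n k
    have hchoose_ne : ((n + k).choose k : ℝ) ≠ 0 :=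
      Nat.cast_ne_zero.2 (Nat.choose_pos (by omega)).ne'
    unfold poissonWeight binomialWeight
    rw [Nat.add_sub_cancel, ← hchoose, mul_pow r (1 - p)]
    push_cast
    field_simp
    ring
  have hsum :
      poissonWeight (r * p) k = Real.exp (-r) * (r * p) ^ k / k ! * Real.exp (r * (1 - p)) := by
    rw [poissonWeight, mul_comm _ (Real.exp _), ← mul_div_assoc, ← mul_assoc, ← Real.exp_add]
    ring_nf
  rw [← Real.exp_eq_exp_ℝ] at h
  rwa [hterm, hsum]

end Poisson

lemma HasSum.swap_of_nonneg {α β : Type*} {f : α → β → ℝ} (hf : ∀ a b, 0 ≤ f a b) {g : α → ℝ}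
    {h : β → ℝ} {s : ℝ} (hg : ∀ a, HasSum (f a) (g a)) (hs : HasSum g s)
    (hh : ∀ b, HasSum (fun a => f a b) (h b)) : HasSum h s := by
  have hsum : Summable (Function.uncurry f) :=
    (summable_prod_of_nonneg fun x => hf x.1 x.2).2
      ⟨fun a => (hg a).summable,
        by simpa only [Function.uncurry_apply_pair, (hg _).tsum_eq] using hs.summable⟩
  have htot : HasSum (Function.uncurry f) s :=
    (hsum.hasSum.prod_fiberwise hg).unique hs ▸ hsum.hasSum
  exact ((Equiv.prodComm β α).hasSum_iff.2 htot).prod_fiberwise hh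

section Mixture

variable {p : ℝ}

lemma hasSum_poissonWeight_mul_binomialTail (hp0 : 0 ≤ p) (hp1 : p ≤ 1) {r : ℝ} (hr : 0 ≤ r)
    (m : ℕ) :
    HasSum (fun n => poissonWeight r n * binomialTail n p m)
      (∑' k, if m ≤ k then poissonWeight (r * p) k else 0) := by
  have htail : Summable fun k => if m ≤ k then poissonWeight (r * p) k else 0 := by
    refine ((hasSum_poissonWeight (r * p)).summable.indicator {k | m ≤ k}).congr fun k => ?_
    simp [Set.indicator_apply]
  refine HasSum.swap_of_nonneg
    (f := fun k n => if m ≤ k then poissonWeight r n * binomialWeight n p k else 0)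
    (fun k n => ?_) (fun k => ?_) htail.hasSum (fun n => ?_)
  · split_ifs
    · exact mul_nonneg (poissonWeight_nonneg hr n) (binomialWeight_nonneg hp0 hp1 n k)
    · exact le_rfl
  · split_ifs
    · exact hasSum_poissonWeight_mul_binomialWeight r p k
    · exact hasSum_zero
  · have h : HasSum (fun k => if m ≤ k then poissonWeight r n * binomialWeight n p k else 0)
        (∑ k ∈ range (n + 1), if m ≤ k then poissonWeight r n * binomialWeight n p k else 0) :=
      hasSum_sum_of_ne_finset_zero fun k hk => by
        simp [binomialWeight_of_lt (by simpa using hk : n < k)]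
    simpa only [binomialTail, mul_sum, mul_ite, mul_zero] using h

lemma binomialTail_le_two_mul_tsum_poissonWeight_mul (hp0 : 0 ≤ p) (hp1 : p ≤ 1) (d m : ℕ) :
    binomialTail d p m ≤ 2 * ∑' n, poissonWeight d n * binomialTail n p m := by
  set g := fun n => poissonWeight d n * binomialTail n p m
  have hg0 : ∀ n, 0 ≤ g n := fun n =>
    mul_nonneg (poissonWeight_nonneg d.cast_nonneg n) (binomialTail_nonneg hp0 hp1 n m)
  have hg : Summable g :=
    (hasSum_poissonWeight d).summable.of_nonneg_of_le hg0 fun n =>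
      mul_le_of_le_one_right (poissonWeight_nonneg d.cast_nonneg n)
        (binomialTail_le_one hp0 hp1 n m)
  have hshift : Summable fun j => poissonWeight d (j + d) :=
    (summable_nat_add_iff d).2 (hasSum_poissonWeight d).summable
  calc binomialTail d p m ≤ binomialTail d p m * (2 * ∑' j, poissonWeight d (j + d)) :=
        le_mul_of_one_le_right (binomialTail_nonneg hp0 hp1 d m)
          (one_le_two_mul_tsum_poissonWeight_add d)
    _ = 2 * ∑' j, poissonWeight d (j + d) * binomialTail d p m := by
        rw [tsum_mul_right]; ring
    _ ≤ 2 * ∑' j, g (j + d) := by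
        refine mul_le_mul_of_nonneg_left ?_ zero_le_two
        exact (hshift.mul_right _).tsum_le_tsum (fun j => mul_le_mul_of_nonneg_left
          (binomialTail_mono hp0 hp1 m (by omega)) (poissonWeight_nonneg d.cast_nonneg _))
          ((summable_nat_add_iff d).2 hg)
    _ ≤ 2 * ∑' n, g n := by
        refine mul_le_mul_of_nonneg_left ?_ zero_le_two
        rw [← hg.sum_add_tsum_nat_add d]
        exact le_add_of_nonneg_left (sum_nonneg fun n _ => hg0 n)

end Mixture

theorem stmt_17_general (d : ℕ) (p : ℝ) (hp0 : 0 ≤ p) (hp1 : p ≤ 1) (t : ℝ) :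
    (∑ k ∈ Finset.range (d + 1),
        if (d * p + t ≤ k) then (d.choose k : ℝ) * p ^ k * (1 - p) ^ (d - k) else 0)
      ≤ 2 * ∑' k : ℕ,
        if (d * p + t ≤ k) then Real.exp (-(d * p)) * (d * p) ^ k / k.factorial else 0 := by
  simp only [← Nat.ceil_le]
  -- up to unfolding, the two sides are now the binomial and `Poisson(dp)` tails at `⌈dp + t⌉₊`
  exact (binomialTail_le_two_mul_tsum_poissonWeight_mul hp0 hp1 d _).trans_eq
    (congrArg (2 * ·) (hasSum_poissonWeight_mul_binomialTail hp0 hp1 d.cast_nonneg _).tsum_eq)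

/-- De-Poissonization transfer: the upper tail of a `Binomial(d, p)` variable
with mean `μ = d·p` is at most twice the corresponding upper tail of a
`Poisson(μ)` variable.  Tails are written out explicitly via the binomial and
Poisson probability mass functions. -/
theorem stmt_17 (d : ℕ) (p : ℝ) (hp0 : 0 ≤ p) (hp1 : p ≤ 1) (t : ℝ) (ht : 0 ≤ t) :
    (∑ k ∈ Finset.range (d + 1),
        if (d * p + t ≤ k) then (d.choose k : ℝ) * p ^ k * (1 - p) ^ (d - k) else 0)
      ≤ 2 * ∑' k : ℕ,
        if (d * p + t ≤ k) then Real.exp (-(d * p)) * (d * p) ^ k / k.factorial else 0 :=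
  stmt_17_general d p hp0 hp1 t
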